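/- arXiv:1003.3195 — 6 statements merged into one kernel-verified Lean document; each statement's English description precedes it below -/
import Mathlib

section
/- For any graph G and any positive integer n, α(G^{⊗n}) ≤ (α*(χ(G)))^n, and consequently the Shannon capacity Θ(G) = lim_n (α(G^{⊗n}))^{1/n} is at most α*(χ(G)). -/
/-!
An independent set of `G^{⊗n}` meets every product `e₁ × ⋯ × eₙ` of cliques of `G` in at most one
vertex, since such a product is a clique of the strong power. Hence its indicator is a fractional
packing of the `n`-th tensor power of the clique hypergraph. Over a fixed product of hyperedges in
the last `n - 1` coordinates, a packing of the tensor power restricts to a packing in the first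
coordinate; summing that coordinate out gives a packing of the `(n - 1)`-st power scaled by
`α*(χ(G))`, so by induction the total weight is at most `α*(χ(G))ⁿ`. Taking `n`-th roots bounds
the Shannon capacity.
-/

open Finset

structure FinHypergraph (V : Type*) [Fintype V] where
  edges : Finset (Finset V)

def FinHypergraph.IsPacking {V : Type*} [Fintype V] (H : FinHypergraph V) (v : V → ℝ) : Prop :=
  (∀ x, 0 ≤ v x) ∧ ∀ e ∈ H.edges, ∑ x ∈ e, v x ≤ 1

noncomputable def FinHypergraph.alphaStar {V : Type*} [Fintype V] (H : FinHypergraph V) : ℝ :=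
  sSup {s | ∃ v : V → ℝ, H.IsPacking v ∧ s = ∑ x, v x}

open scoped Classical in
/-- The clique hypergraph of a graph: hyperedges are all cliques. -/
noncomputable def cliqueHypergraph {V : Type*} [Fintype V] (G : SimpleGraph V) :
    FinHypergraph V :=
  ⟨Finset.univ.filter fun s : Finset V => G.IsClique (s : Set V)⟩

/-- The independence number of a finite graph. -/
noncomputable def indepNum {V : Type*} [Fintype V] (G : SimpleGraph V) : ℕ :=
  sSup {n | ∃ s : Finset V, (∀ x ∈ s, ∀ y ∈ s, x ≠ y → ¬ G.Adj x y) ∧ s.card = n}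

/-- The `n`-fold strong product of a graph with itself: vertices are `n`-tuples,
two distinct tuples are adjacent iff in each coordinate the entries are equal or adjacent. -/
def strongPow {V : Type*} (G : SimpleGraph V) (n : ℕ) : SimpleGraph (Fin n → V) where
  Adj a b := a ≠ b ∧ ∀ i, a i = b i ∨ G.Adj (a i) (b i)
  symm := ⟨by
    rintro a b ⟨h1, h2⟩
    exact ⟨h1.symm, fun i => (h2 i).imp Eq.symm (fun h => h.symm)⟩⟩
  loopless := ⟨by intro a h; exact h.1 rfl⟩

lemma Fintype.sum_piFinset_cons {V M : Type*} [AddCommMonoid M] {n : ℕ} (e₀ : Finset V)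
    (e : Fin n → Finset V) (v : (Fin (n + 1) → V) → M) :
    ∑ a ∈ piFinset (Fin.cons e₀ e), v a = ∑ x ∈ e₀, ∑ b ∈ piFinset e, v (Fin.cons x b) := by
  classical
  have h := filter_piFinset_eq_map_consEquiv (Fin.cons e₀ e : Fin (n + 1) → Finset V) fun _ ↦ True
  simp only [filter_true, Fin.cons_zero, Fin.tail_cons] at h
  rw [h, sum_map, sum_product]
  rfl

lemma Fintype.sum_fin_succ_pi {V M : Type*} [Fintype V] [AddCommMonoid M] {n : ℕ}
    (v : (Fin (n + 1) → V) → M) :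
    ∑ a, v a = ∑ x, ∑ b, v (Fin.cons x b) := by
  rw [← (Fin.consEquiv fun _ ↦ V).sum_comp, Fintype.sum_prod_type]
  rfl

namespace FinHypergraph

variable {V : Type*} [Fintype V]

open scoped Classical in
/-- The `n`-th tensor power: its hyperedges are the products `e₁ × ⋯ × eₙ` of hyperedges. -/
noncomputable def tensorPow (H : FinHypergraph V) (n : ℕ) : FinHypergraph (Fin n → V) :=
  ⟨(Fintype.piFinset fun _ ↦ H.edges).image Fintype.piFinset⟩

lemma mem_tensorPow_edges {H : FinHypergraph V} {n : ℕ} {E : Finset (Fin n → V)} :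
    E ∈ (H.tensorPow n).edges ↔
      ∃ e : Fin n → Finset V, (∀ i, e i ∈ H.edges) ∧ Fintype.piFinset e = E := by
  simp [tensorPow]

lemma IsPacking.mono {H H' : FinHypergraph V} (h : H'.edges ⊆ H.edges) {v : V → ℝ}
    (hv : H.IsPacking v) : H'.IsPacking v :=
  ⟨hv.1, fun e he ↦ hv.2 e (h he)⟩

variable {H : FinHypergraph V}

lemma le_of_forall_sum_edge_le (hH : ∀ x, ∃ e ∈ H.edges, x ∈ e) {w : V → ℝ}
    (hw₀ : ∀ x, 0 ≤ w x) {c : ℝ} (hw : ∀ e ∈ H.edges, ∑ x ∈ e, w x ≤ c) (x : V) : w x ≤ c :=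
  let ⟨e, he, hxe⟩ := hH x
  (single_le_sum (fun y _ ↦ hw₀ y) hxe).trans (hw e he)

/- Without the covering hypothesis a vertex outside every edge carries unbounded weight, and
`alphaStar` is then the junk value `0` that `sSup` takes on unbounded sets. -/
lemma bddAbove_packingSums (hH : ∀ x, ∃ e ∈ H.edges, x ∈ e) :
    BddAbove {s | ∃ v : V → ℝ, H.IsPacking v ∧ s = ∑ x, v x} := by
  refine ⟨Fintype.card V, ?_⟩
  rintro _ ⟨v, hv, rfl⟩
  exact (sum_le_sum fun x _ ↦ le_of_forall_sum_edge_le hH hv.1 hv.2 x).trans_eq (by simp)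

lemma alphaStar_nonneg (hH : ∀ x, ∃ e ∈ H.edges, x ∈ e) : 0 ≤ H.alphaStar :=
  le_csSup (bddAbove_packingSums hH) ⟨0, ⟨fun _ ↦ le_rfl, fun e _ ↦ by simp⟩, by simp⟩

lemma IsPacking.sum_le_alphaStar (hH : ∀ x, ∃ e ∈ H.edges, x ∈ e) {v : V → ℝ}
    (hv : H.IsPacking v) : ∑ x, v x ≤ H.alphaStar :=
  le_csSup (bddAbove_packingSums hH) ⟨v, hv, rfl⟩

lemma sum_le_mul_alphaStar (hH : ∀ x, ∃ e ∈ H.edges, x ∈ e) {w : V → ℝ} (hw₀ : ∀ x, 0 ≤ w x)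
    {c : ℝ} (hc : 0 ≤ c) (hw : ∀ e ∈ H.edges, ∑ x ∈ e, w x ≤ c) :
    ∑ x, w x ≤ c * H.alphaStar := by
  rcases hc.eq_or_lt with rfl | hc
  · simpa using sum_nonpos fun x _ ↦ le_of_forall_sum_edge_le hH hw₀ hw x
  · have hpacking : H.IsPacking fun x ↦ w x / c :=
      ⟨fun x ↦ div_nonneg (hw₀ x) hc.le, fun e he ↦ by
        rw [← sum_div, div_le_one hc]
        exact hw e he⟩
    have h := hpacking.sum_le_alphaStar hH
    rwa [← sum_div, div_le_iff₀' hc] at h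

lemma sum_le_mul_alphaStar_pow (hH : ∀ x, ∃ e ∈ H.edges, x ∈ e) {n : ℕ}
    {v : (Fin n → V) → ℝ} (hv₀ : ∀ a, 0 ≤ v a) {c : ℝ} (hc : 0 ≤ c)
    (hv : ∀ E ∈ (H.tensorPow n).edges, ∑ a ∈ E, v a ≤ c) :
    ∑ a, v a ≤ c * H.alphaStar ^ n := by
  induction n generalizing c with
  | zero =>
    have huniv : (univ : Finset (Fin 0 → V)) ∈ (H.tensorPow 0).edges :=
      mem_tensorPow_edges.2 ⟨fun i ↦ i.elim0, fun i ↦ i.elim0,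
        eq_univ_of_forall fun _ ↦ Fintype.mem_piFinset.2 fun i ↦ i.elim0⟩
    simpa using hv _ huniv
  | succ n ih =>
    have hslice : ∀ E ∈ (H.tensorPow n).edges,
        ∑ b ∈ E, ∑ x, v (Fin.cons x b) ≤ c * H.alphaStar := by
      intro _ hE
      obtain ⟨e, he, rfl⟩ := mem_tensorPow_edges.1 hE
      rw [sum_comm]
      refine sum_le_mul_alphaStar hH (fun x ↦ sum_nonneg fun b _ ↦ hv₀ _) hc fun e₀ he₀ ↦ ?_
      rw [← Fintype.sum_piFinset_cons]
      exact hv _ (mem_tensorPow_edges.2 ⟨Fin.cons e₀ e, Fin.cases he₀ he, rfl⟩)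
    calc ∑ a, v a = ∑ b, ∑ x, v (Fin.cons x b) := by rw [Fintype.sum_fin_succ_pi, sum_comm]
      _ ≤ c * H.alphaStar * H.alphaStar ^ n :=
        ih (fun b ↦ sum_nonneg fun x _ ↦ hv₀ _) (mul_nonneg hc (alphaStar_nonneg hH)) hslice
      _ = c * H.alphaStar ^ (n + 1) := by ring

lemma IsPacking.sum_le_alphaStar_pow (hH : ∀ x, ∃ e ∈ H.edges, x ∈ e) {n : ℕ}
    {v : (Fin n → V) → ℝ} (hv : (H.tensorPow n).IsPacking v) :
    ∑ a, v a ≤ H.alphaStar ^ n :=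
  (sum_le_mul_alphaStar_pow hH hv.1 zero_le_one hv.2).trans_eq (one_mul _)

end FinHypergraph

lemma isClique_strongPow_piFinset {V : Type*} {G : SimpleGraph V} {n : ℕ} {e : Fin n → Finset V}
    (he : ∀ i, G.IsClique (e i : Set V)) :
    (strongPow G n).IsClique (Fintype.piFinset e : Set (Fin n → V)) := by
  intro a ha b hb hab
  simp only [mem_coe, Fintype.mem_piFinset] at ha hb
  exact ⟨hab, fun i ↦ or_iff_not_imp_left.2 (he i (ha i) (hb i))⟩

section CliqueHypergraph

variable {V : Type*} [Fintype V] {G : SimpleGraph V}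

lemma mem_cliqueHypergraph_edges {s : Finset V} :
    s ∈ (cliqueHypergraph G).edges ↔ G.IsClique (s : Set V) := by
  simp [cliqueHypergraph]

lemma exists_mem_cliqueHypergraph_edges (x : V) : ∃ e ∈ (cliqueHypergraph G).edges, x ∈ e :=
  ⟨{x}, mem_cliqueHypergraph_edges.2 (by simp), mem_singleton_self x⟩

lemma isPacking_cliqueHypergraph_indicator [DecidableEq V] {s : Finset V}
    (hs : ∀ x ∈ s, ∀ y ∈ s, x ≠ y → ¬ G.Adj x y) :
    (cliqueHypergraph G).IsPacking fun a ↦ if a ∈ s then 1 else 0 := by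
  refine ⟨fun _ ↦ ite_nonneg zero_le_one le_rfl, fun e he ↦ ?_⟩
  rw [sum_ite_mem, sum_const, nsmul_one, Nat.cast_le_one]
  refine card_le_one.2 fun a ha b hb ↦ ?_
  rw [mem_inter] at ha hb
  by_contra hab
  exact hs a ha.2 b hb.2 hab (mem_cliqueHypergraph_edges.1 he ha.1 hb.1 hab)

lemma tensorPow_cliqueHypergraph_edges_subset (n : ℕ) :
    ((cliqueHypergraph G).tensorPow n).edges ⊆ (cliqueHypergraph (strongPow G n)).edges := by
  intro E hE
  obtain ⟨e, he, rfl⟩ := FinHypergraph.mem_tensorPow_edges.1 hE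
  exact mem_cliqueHypergraph_edges.2
    (isClique_strongPow_piFinset fun i ↦ mem_cliqueHypergraph_edges.1 (he i))

lemma card_le_alphaStar_pow [DecidableEq V] {n : ℕ} {s : Finset (Fin n → V)}
    (hs : ∀ x ∈ s, ∀ y ∈ s, x ≠ y → ¬ (strongPow G n).Adj x y) :
    (#s : ℝ) ≤ (cliqueHypergraph G).alphaStar ^ n := by
  have hpacking := (isPacking_cliqueHypergraph_indicator hs).mono
    (tensorPow_cliqueHypergraph_edges_subset n)
  simpa [sum_ite_mem] using hpacking.sum_le_alphaStar_pow exists_mem_cliqueHypergraph_edges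

lemma exists_card_eq_indepNum (G : SimpleGraph V) :
    ∃ s : Finset V, (∀ x ∈ s, ∀ y ∈ s, x ≠ y → ¬ G.Adj x y) ∧ #s = indepNum G :=
  Nat.sSup_mem (s := {n | ∃ s : Finset V, (∀ x ∈ s, ∀ y ∈ s, x ≠ y → ¬ G.Adj x y) ∧ #s = n})
    ⟨0, ∅, by simp, rfl⟩ ⟨Fintype.card V, by rintro _ ⟨s, -, rfl⟩; exact card_le_univ s⟩

lemma indepNum_strongPow_le (n : ℕ) :
    (indepNum (strongPow G n) : ℝ) ≤ (cliqueHypergraph G).alphaStar ^ n := by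
  classical
  obtain ⟨s, hs, hcard⟩ := exists_card_eq_indepNum (strongPow G n)
  rw [← hcard]
  exact card_le_alphaStar_pow hs

end CliqueHypergraph

open Filter Topology in
lemma le_of_tendsto_rpow_one_div_of_le_pow {x : ℕ → ℝ} {a Θ : ℝ} (hx₀ : ∀ n, 0 ≤ x n)
    (ha : 0 ≤ a) (hxa : ∀ n, x n ≤ a ^ n)
    (hΘ : Tendsto (fun n : ℕ ↦ x n ^ (1 / (n : ℝ))) atTop (𝓝 Θ)) : Θ ≤ a := by
  refine le_of_tendsto hΘ ?_
  filter_upwards [eventually_ge_atTop 1] with n hn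
  rw [one_div, Real.rpow_inv_le_iff_of_pos (hx₀ n) ha (by exact_mod_cast hn), Real.rpow_natCast]
  exact hxa n

theorem indepNum_strongPow_le_and_shannonCapacity_le {V : Type*} [Fintype V]
    (G : SimpleGraph V) :
    (∀ n : ℕ, 1 ≤ n →
      (indepNum (strongPow G n) : ℝ) ≤ ((cliqueHypergraph G).alphaStar) ^ n) ∧
    (∀ Θ : ℝ,
      Filter.Tendsto (fun n : ℕ => (indepNum (strongPow G n) : ℝ) ^ (1 / (n : ℝ)))
        Filter.atTop (nhds Θ) →
      Θ ≤ (cliqueHypergraph G).alphaStar) :=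
  ⟨fun n _ ↦ indepNum_strongPow_le n, fun _ ↦
    le_of_tendsto_rpow_one_div_of_le_pow (fun _ ↦ Nat.cast_nonneg _)
      (FinHypergraph.alphaStar_nonneg exists_mem_cliqueHypergraph_edges) indepNum_strongPow_le⟩
end

section
/- For any channel N from finite input set X to finite output set Y and any input distribution p on X, the mutual information between input and output is at most log(Σ_y max_x N(y|x)). -/
/-!
Write `q` for the output distribution and `ν y = max_x N(y|x)`. Since `N(y|x) ≤ ν y`, every
term of the mutual information only grows when `N(y|x)` inside the logarithm is replaced by
`ν y`, and summing over `x` leaves `∑_y q y log (ν y / q y)`. By Jensen's inequality for the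
concave logarithm with weights `q`, this is at most `log (∑_y ν y)`.
-/

open Finset

/-- The mutual information between the input and output of a channel `N` with input
distribution `p` (terms with `N(y|x) p(x) = 0` contribute `0`). -/
noncomputable def mutualInfo {X Y : Type*} [Fintype X] [Fintype Y]
    (N : X → Y → ℝ) (p : X → ℝ) : ℝ :=
  ∑ x : X, ∑ y : Y, N x y * p x * Real.log (N x y / ∑ z : X, N z y * p z)

open Real

theorem sum_mul_log_div_le_log_sum {ι : Type*} [Fintype ι] {q ν : ι → ℝ}
    (hq : ∀ i, 0 ≤ q i) (hq_sum : ∑ i, q i = 1) (hν : ∀ i, 0 ≤ ν i)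
    (hqν : ∀ i, 0 < q i → 0 < ν i) :
    ∑ i, q i * log (ν i / q i) ≤ log (∑ i, ν i) := by
  classical
  set t := univ.filter fun i => 0 < q i
  have hq_zero : ∀ i ∈ univ, i ∉ t → q i = 0 := fun i _ hi =>
    le_antisymm (not_lt.mp fun h => hi (mem_filter.mpr ⟨mem_univ i, h⟩)) (hq i)
  have hq_sum_t : ∑ i ∈ t, q i = 1 := by
    rw [sum_subset (subset_univ t) hq_zero, hq_sum]
  have ht : t.Nonempty := nonempty_of_sum_ne_zero (by rw [hq_sum_t]; exact one_ne_zero)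
  have hq_pos : ∀ i ∈ t, 0 < q i := fun i hi => (mem_filter.mp hi).2
  calc ∑ i, q i * log (ν i / q i) = ∑ i ∈ t, q i • log (ν i / q i) := by
        refine (sum_subset (subset_univ t) fun i hi hit => ?_).symm
        simp [hq_zero i hi hit]
    _ ≤ log (∑ i ∈ t, q i • (ν i / q i)) :=
        strictConcaveOn_log_Ioi.concaveOn.le_map_sum (fun i hi => (hq_pos i hi).le) hq_sum_t
          fun i hi => div_pos (hqν i (hq_pos i hi)) (hq_pos i hi)
    _ = log (∑ i ∈ t, ν i) := by
        congr 1
        exact sum_congr rfl fun i hi => mul_div_cancel₀ _ (hq_pos i hi).ne'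
    _ ≤ log (∑ i, ν i) :=
        log_le_log (sum_pos (fun i hi => hqν i (hq_pos i hi)) ht)
          (sum_le_sum_of_subset_of_nonneg (subset_univ t) fun i _ _ => hν i)

noncomputable def outputDist {X Y : Type*} [Fintype X] (N : X → Y → ℝ) (p : X → ℝ) (y : Y) : ℝ :=
  ∑ x, N x y * p x

section Channel

variable {X Y : Type*} [Fintype X] {N : X → Y → ℝ} {p : X → ℝ}

theorem outputDist_nonneg (hN : ∀ x y, 0 ≤ N x y) (hp : ∀ x, 0 ≤ p x) (y : Y) :
    0 ≤ outputDist N p y :=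
  sum_nonneg fun x _ => mul_nonneg (hN x y) (hp x)

theorem sum_outputDist [Fintype Y] (hN : ∀ x, ∑ y, N x y = 1) (hp : ∑ x, p x = 1) :
    ∑ y, outputDist N p y = 1 := by
  simp only [outputDist]
  rw [sum_comm]
  simp only [← sum_mul, hN, one_mul, hp]

theorem outputDist_le {y : Y} {c : ℝ} (hp : ∀ x, 0 ≤ p x) (hp_sum : ∑ x, p x = 1)
    (hNc : ∀ x, N x y ≤ c) : outputDist N p y ≤ c :=
  calc outputDist N p y ≤ ∑ x, c * p x :=
        sum_le_sum fun x _ => mul_le_mul_of_nonneg_right (hNc x) (hp x)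
    _ = c := by rw [← mul_sum, hp_sum, mul_one]

theorem mutualInfo_le_sum_mul_log_div [Fintype Y] {ν : Y → ℝ} (hN : ∀ x y, 0 ≤ N x y)
    (hp : ∀ x, 0 ≤ p x) (hNν : ∀ x y, N x y ≤ ν y) :
    mutualInfo N p ≤ ∑ y, outputDist N p y * log (ν y / outputDist N p y) := by
  have hterm : ∀ x y, N x y * p x * log (N x y / outputDist N p y) ≤
      N x y * p x * log (ν y / outputDist N p y) := by
    intro x y
    rcases (mul_nonneg (hN x y) (hp x)).eq_or_lt with h0 | hpos
    · simp [← h0]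
    have hq : 0 < outputDist N p y := hpos.trans_le
      (single_le_sum (fun z _ => mul_nonneg (hN z y) (hp z)) (mem_univ x))
    have hNxy : 0 < N x y := pos_of_mul_pos_left hpos (hp x)
    gcongr
    exact hNν x y
  calc mutualInfo N p ≤ ∑ x, ∑ y, N x y * p x * log (ν y / outputDist N p y) :=
        sum_le_sum fun x _ => sum_le_sum fun y _ => hterm x y
    _ = ∑ y, outputDist N p y * log (ν y / outputDist N p y) := by
        rw [sum_comm]
        simp only [outputDist, sum_mul]

end Channel

theorem mutualInfo_le_log_nu_general {X Y : Type*} [Fintype X] [Fintype Y]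
    (N : X → Y → ℝ) (p : X → ℝ)
    (hNnonneg : ∀ x y, 0 ≤ N x y) (hNstoch : ∀ x, ∑ y : Y, N x y = 1)
    (hpnonneg : ∀ x, 0 ≤ p x) (hpsum : ∑ x : X, p x = 1) :
    mutualInfo N p ≤ Real.log (∑ y : Y, ⨆ x : X, N x y) := by
  have hN_le : ∀ x y, N x y ≤ ⨆ x, N x y := fun x y =>
    le_ciSup (f := fun x => N x y) (Set.finite_range _).bddAbove x
  calc mutualInfo N p ≤ ∑ y, outputDist N p y * log ((⨆ x, N x y) / outputDist N p y) :=
        mutualInfo_le_sum_mul_log_div hNnonneg hpnonneg hN_le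
    _ ≤ log (∑ y, ⨆ x, N x y) :=
        sum_mul_log_div_le_log_sum (outputDist_nonneg hNnonneg hpnonneg)
          (sum_outputDist hNstoch hpsum) (fun y => Real.iSup_nonneg fun x => hNnonneg x y)
          fun y hy => hy.trans_le (outputDist_le hpnonneg hpsum fun x => hN_le x y)

theorem mutualInfo_le_log_nu {X Y : Type*} [Fintype X] [Fintype Y] [Nonempty X]
    (N : X → Y → ℝ) (p : X → ℝ)
    (hNnonneg : ∀ x y, 0 ≤ N x y) (hNstoch : ∀ x, ∑ y : Y, N x y = 1)
    (hpnonneg : ∀ x, 0 ≤ p x) (hpsum : ∑ x : X, p x = 1) :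
    mutualInfo N p ≤ Real.log (∑ y : Y, ⨆ x : X, N x y) :=
  mutualInfo_le_log_nu_general N p hNnonneg hNstoch hpnonneg hpsum
end

section
/- For all integers n ≥ m ≥ 1 and q ≥ 1, there exists an m-touching subset T of [n]^q of cardinality at most min{ n^q, ⌈2nq·(n/m)^q⌉ }, where T ⊆ [n]^q is m-touching if for all m-element subsets x_1,…,x_q of [n], T intersects x_1 × x_2 × ⋯ × x_q. -/
/-!
Choose `r = ⌈2nq (n/m)^q⌉` points of `[n]^q` independently and uniformly at random. A fixed box
`x_1 × ⋯ × x_q` of side `m` is missed by all of them with probability `(1 - (m/n)^q)^r ≤ e^{-2nq}`,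
and there are at most `binom(n, m)^q ≤ 2^{nq}` boxes, so by the union bound some choice of the `r`
points meets every box. The argument is carried out by counting the `r`-tuples that miss a box.
-/

open Finset

/-- `T ⊆ [n]^q` is `m`-touching if it meets every product `x_1 × ⋯ × x_q` of
`m`-element subsets of `[n]`. -/
def IsTouching (n q m : ℕ) (T : Finset (Fin q → Fin n)) : Prop :=
  ∀ x : Fin q → Finset (Fin n), (∀ i, (x i).card = m) → ∃ t ∈ T, ∀ i, t i ∈ x i

theorem exists_card_le_forall_exists_mem_of_card_mul_lt {ι α : Type*} [Fintype α] [DecidableEq α]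
    (I : Finset ι) (A : ι → Finset α) {k r : ℕ} (hk : ∀ i ∈ I, k ≤ #(A i))
    (h : #I * (Fintype.card α - k) ^ r < Fintype.card α ^ r) :
    ∃ T : Finset α, #T ≤ r ∧ ∀ i ∈ I, ∃ t ∈ T, t ∈ A i := by
  obtain ⟨s, hs⟩ : ∃ s : Fin r → α, ∀ i ∈ I, ∃ j, s j ∈ A i := by
    by_contra! hmiss
    have hcover : (univ : Finset (Fin r → α)) ⊆
        I.biUnion fun i => Fintype.piFinset fun _ => (A i)ᶜ := by
      intro s _
      obtain ⟨i, hi, hsi⟩ := hmiss s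
      exact mem_biUnion.2 ⟨i, hi, Fintype.mem_piFinset.2 fun j => mem_compl.2 (hsi j)⟩
    have hmissing : #(I.biUnion fun i => Fintype.piFinset fun _ : Fin r => (A i)ᶜ) ≤
        #I * (Fintype.card α - k) ^ r :=
      card_biUnion_le_card_mul _ _ _ fun i hi => by
        rw [Fintype.card_piFinset_const, card_compl]
        gcongr
        exact hk i hi
    have := (card_le_card hcover).trans hmissing
    simp only [card_univ, Fintype.card_fun, Fintype.card_fin] at this
    omega
  refine ⟨image s univ, card_image_le.trans (by simp), fun i hi => ?_⟩
  obtain ⟨j, hj⟩ := hs i hi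
  exact ⟨s j, mem_image_of_mem s (mem_univ j), hj⟩

theorem two_pow_mul_one_sub_pow_lt_one {p : ℝ} {a r : ℕ} (hp : p ≤ 1) (ha : 0 < a)
    (h : a ≤ p * r) : 2 ^ a * (1 - p) ^ r < 1 :=
  calc 2 ^ a * (1 - p) ^ r ≤ 2 ^ a * Real.exp (-a) := by
        gcongr
        calc (1 - p) ^ r ≤ Real.exp (-p) ^ r := by
              gcongr
              linarith [Real.add_one_le_exp (-p)]
          _ = Real.exp (-(p * r)) := by rw [← Real.exp_nat_mul]; ring_nf
          _ ≤ Real.exp (-a) := by gcongr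
    _ < Real.exp 1 ^ a * Real.exp (-a) := by
        gcongr
        linarith [Real.add_one_lt_exp one_ne_zero]
    _ = 1 := by rw [← Real.exp_nat_mul, ← Real.exp_add]; simp

theorem two_pow_mul_sub_pow_lt_pow {N K a r : ℕ} (hN : 0 < N) (hKN : K ≤ N) (ha : 0 < a)
    (h : a * N ≤ K * r) : 2 ^ a * (N - K) ^ r < N ^ r := by
  have hN' : (0 : ℝ) < N := by exact_mod_cast hN
  set p : ℝ := K / N
  have hsub : (N : ℝ) - K = N * (1 - p) := by
    simp only [p]
    field_simp
  have hpr : (a : ℝ) ≤ p * r := by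
    rw [div_mul_eq_mul_div, le_div_iff₀ hN']
    exact_mod_cast h
  have hp : p ≤ 1 := div_le_one_of_le₀ (by exact_mod_cast hKN) hN'.le
  rw [← Nat.cast_lt (α := ℝ)]
  push_cast [Nat.cast_sub hKN]
  calc (2 : ℝ) ^ a * (N - K) ^ r = N ^ r * (2 ^ a * (1 - p) ^ r) := by rw [hsub, mul_pow]; ring
    _ < N ^ r * 1 := by gcongr; exact two_pow_mul_one_sub_pow_lt_one hp ha hpr
    _ = N ^ r := mul_one _

theorem mul_mul_pow_le_pow_mul_ceil (n q : ℕ) {m : ℕ} (hm : 0 < m) :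
    n * q * n ^ q ≤ m ^ q * ⌈2 * (n : ℝ) * q * ((n : ℝ) / m) ^ q⌉₊ := by
  have hm' : (0 : ℝ) < m := by exact_mod_cast hm
  have hcancel : (m : ℝ) ^ q * (2 * n * q * (n / m) ^ q) = 2 * (n * q * n ^ q) := by
    rw [div_pow]
    field_simp
  rw [← Nat.cast_le (α := ℝ)]
  push_cast
  calc (n : ℝ) * q * n ^ q ≤ 2 * (n * q * n ^ q) := by
        linarith [show (0 : ℝ) ≤ n * q * n ^ q by positivity]
    _ = m ^ q * (2 * n * q * (n / m) ^ q) := hcancel.symm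
    _ ≤ m ^ q * _ := by gcongr; exact Nat.le_ceil _

theorem exists_touching_set (n m q : ℕ) (hm : 1 ≤ m) (hmn : m ≤ n) (hq : 1 ≤ q) :
    ∃ T : Finset (Fin q → Fin n), IsTouching n q m T ∧
      T.card ≤ min (n ^ q) ⌈2 * (n : ℝ) * q * ((n : ℝ) / m) ^ q⌉₊ := by
  set r := ⌈2 * (n : ℝ) * q * ((n : ℝ) / m) ^ q⌉₊
  have hn : 0 < n := hm.trans hmn
  have hr := mul_mul_pow_le_pow_mul_ceil n q hm
  have hcount : (n.choose m) ^ q * (n ^ q - m ^ q) ^ r < (n ^ q) ^ r :=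
    calc (n.choose m) ^ q * (n ^ q - m ^ q) ^ r ≤ 2 ^ (n * q) * (n ^ q - m ^ q) ^ r := by
          rw [pow_mul]
          gcongr
          exact Nat.choose_le_two_pow n m
      _ < (n ^ q) ^ r := two_pow_mul_sub_pow_lt_pow (pow_pos hn q) (Nat.pow_le_pow_left hmn q)
          (Nat.mul_pos hn hq) hr
  obtain ⟨T, hTr, hT⟩ := exists_card_le_forall_exists_mem_of_card_mul_lt
    (Fintype.piFinset fun _ : Fin q => powersetCard m (univ : Finset (Fin n)))
    Fintype.piFinset (k := m ^ q) (fun x hx => by simp_all [Fintype.card_piFinset])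
    (by simpa [Fintype.card_piFinset] using hcount)
  refine ⟨T, fun x hx => ?_, le_min ((card_le_univ T).trans (by simp)) hTr⟩
  obtain ⟨t, ht, htx⟩ := hT x (by simp [hx])
  exact ⟨t, ht, Fintype.mem_piFinset.1 htx⟩
end

section
/- Let q, d be positive integers and suppose G is a finite graph that admits an orthonormal representation in ℂ^d and whose vertex set can be partitioned into q cliques each of size d. Then the Lovász theta number of G equals q: ϑ(G) = q. -/
open Finset
open scoped InnerProductSpace

/-- The Lovász theta number of a graph, via orthonormal representations of the
complement with a handle: `ϑ(G) = min_{c,(u_x)} max_x 1/⟨c,u_x⟩²`, where the `u_x` are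
unit vectors with `u_x ⊥ u_y` for distinct non-adjacent `x, y` and `c` is a unit vector. -/
noncomputable def lovaszTheta {V : Type*} [Fintype V] (G : SimpleGraph V) : ℝ :=
  sInf {t | ∃ (d : ℕ) (u : V → EuclideanSpace ℝ (Fin d)) (c : EuclideanSpace ℝ (Fin d)),
    (∀ x, ‖u x‖ = 1) ∧ ‖c‖ = 1 ∧
    (∀ x y, x ≠ y → ¬ G.Adj x y → ⟪u x, u y⟫_ℝ = 0) ∧
    ∀ x, 1 ≤ t * ⟪c, u x⟫_ℝ ^ 2}

/-!
For `ϑ(G) ≤ q`, send each vertex to the standard basis vector of its clique and take the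
uniform unit vector as handle: non-adjacent vertices lie in different cliques.

For `q ≤ ϑ(G)`, let `(u, c)` witness a value `t`. The vectors `Γ x ⊗ u x` are orthonormal,
since `Γ` handles the edges and `u` the non-edges. Bessel's inequality against `e_a ⊗ c`,
summed over the `d` coordinates `a`, gives `∑ₓ ⟪c, u x⟫² ≤ d`; as each term is at least
`1 / t` and `|V| = q d`, this forces `q ≤ t`.
-/

namespace EuclideanSpace

variable {𝕜 : Type*} [RCLike 𝕜] {ι κ : Type*} [Fintype ι] [Fintype κ]

noncomputable def tensorReal (v : EuclideanSpace 𝕜 ι) (w : EuclideanSpace ℝ κ) :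
    EuclideanSpace 𝕜 (ι × κ) :=
  WithLp.toLp 2 fun p => v p.1 * (w p.2 : 𝕜)

theorem inner_tensorReal (v v' : EuclideanSpace 𝕜 ι) (w w' : EuclideanSpace ℝ κ) :
    ⟪tensorReal v w, tensorReal v' w'⟫_𝕜 = ⟪v, v'⟫_𝕜 * (⟪w, w'⟫_ℝ : 𝕜) := by
  simp only [tensorReal, PiLp.inner_apply, RCLike.inner_apply, conj_trivial,
    Fintype.sum_prod_type, Finset.sum_mul_sum, RCLike.ofReal_sum, map_mul,
    RCLike.conj_ofReal]
  refine Finset.sum_congr rfl fun _ _ => Finset.sum_congr rfl fun _ _ => by ring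

theorem norm_tensorReal (v : EuclideanSpace 𝕜 ι) (w : EuclideanSpace ℝ κ) :
    ‖tensorReal v w‖ = ‖v‖ * ‖w‖ := by
  rw [@norm_eq_sqrt_re_inner 𝕜, inner_tensorReal, inner_self_eq_norm_sq_to_K,
    real_inner_self_eq_norm_sq, ← RCLike.ofReal_pow, ← RCLike.ofReal_mul, RCLike.ofReal_re,
    ← mul_pow, Real.sqrt_sq (by positivity)]

end EuclideanSpace

open EuclideanSpace

theorem Fintype.card_eq_sum_card_of_existsUnique_mem {V κ : Type*} [Fintype V] [Fintype κ]
    (P : κ → Finset V) (hP : ∀ v, ∃! i, v ∈ P i) :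
    Fintype.card V = ∑ i, #(P i) := by
  classical
  have hcover : univ.biUnion P = univ :=
    eq_univ_of_forall fun v => mem_biUnion.2 ⟨(hP v).exists.choose, mem_univ _,
      (hP v).exists.choose_spec⟩
  rw [← card_univ, ← hcover, card_biUnion]
  exact fun i _ j _ hij => disjoint_left.2 fun v hvi hvj => hij ((hP v).unique hvi hvj)

section OrthonormalRep

variable {V : Type*} {G : SimpleGraph V}
  {𝕜 : Type*} [RCLike 𝕜] {ι κ : Type*} [Fintype ι] [Fintype κ]

theorem orthonormal_tensorReal {Γ : V → EuclideanSpace 𝕜 ι} (hΓ : ∀ x, ‖Γ x‖ = 1)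
    (hΓorth : ∀ x y, G.Adj x y → ⟪Γ x, Γ y⟫_𝕜 = 0) {u : V → EuclideanSpace ℝ κ}
    (hu : ∀ x, ‖u x‖ = 1) (huorth : ∀ x y, x ≠ y → ¬G.Adj x y → ⟪u x, u y⟫_ℝ = 0) :
    Orthonormal 𝕜 fun x => tensorReal (Γ x) (u x) := by
  classical
  rw [orthonormal_iff_ite]
  intro x y
  rw [inner_tensorReal]
  by_cases hxy : x = y
  · subst hxy
    simp [inner_self_eq_norm_sq_to_K, hΓ, hu]
  · by_cases hadj : G.Adj x y
    · simp [hxy, hΓorth x y hadj]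
    · simp [hxy, huorth x y hxy hadj]

theorem sum_inner_sq_le_card_of_orthonormalRep [Fintype V] {Γ : V → EuclideanSpace 𝕜 ι}
    (hΓ : ∀ x, ‖Γ x‖ = 1) (hΓorth : ∀ x y, G.Adj x y → ⟪Γ x, Γ y⟫_𝕜 = 0)
    {u : V → EuclideanSpace ℝ κ} (hu : ∀ x, ‖u x‖ = 1)
    (huorth : ∀ x y, x ≠ y → ¬G.Adj x y → ⟪u x, u y⟫_ℝ = 0)
    {c : EuclideanSpace ℝ κ} (hc : ‖c‖ = 1) :
    ∑ x, ⟪c, u x⟫_ℝ ^ 2 ≤ Fintype.card ι := by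
  classical
  set h : ι → EuclideanSpace 𝕜 (ι × κ) := fun a => tensorReal (single a 1) c
  have hw := orthonormal_tensorReal hΓ hΓorth hu huorth
  calc ∑ x, ⟪c, u x⟫_ℝ ^ 2
      = ∑ x, ∑ a, ‖⟪tensorReal (Γ x) (u x), h a⟫_𝕜‖ ^ 2 := by
        refine sum_congr rfl fun x _ => ?_
        simp_rw [h, inner_tensorReal, norm_mul, mul_pow, ← sum_mul]
        simp only [← basisFun_apply]
        rw [(basisFun ι 𝕜).sum_sq_norm_inner_left, hΓ, RCLike.norm_ofReal,
          sq_abs, real_inner_comm, one_pow, one_mul]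
    _ = ∑ a, ∑ x, ‖⟪tensorReal (Γ x) (u x), h a⟫_𝕜‖ ^ 2 := sum_comm
    _ ≤ ∑ a, ‖h a‖ ^ 2 := sum_le_sum fun a _ => hw.sum_inner_products_le (h a)
    _ = Fintype.card ι := by simp [h, norm_tensorReal, hc]

end OrthonormalRep

section LovaszTheta

variable {V : Type*} (G : SimpleGraph V)

def lovaszThetaValues : Set ℝ :=
  {t | ∃ (d : ℕ) (u : V → EuclideanSpace ℝ (Fin d)) (c : EuclideanSpace ℝ (Fin d)),
    (∀ x, ‖u x‖ = 1) ∧ ‖c‖ = 1 ∧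
    (∀ x y, x ≠ y → ¬ G.Adj x y → ⟪u x, u y⟫_ℝ = 0) ∧
    ∀ x, 1 ≤ t * ⟪c, u x⟫_ℝ ^ 2}

theorem lovaszTheta_eq_sInf [Fintype V] : lovaszTheta G = sInf (lovaszThetaValues G) := rfl

variable {G}

theorem natCast_mem_lovaszThetaValues_of_cliqueCover {q : ℕ} (hq : 0 < q) (f : V → Fin q)
    (hf : ∀ x y, x ≠ y → ¬G.Adj x y → f x ≠ f y) : (q : ℝ) ∈ lovaszThetaValues G := by
  have hq' : (0 : ℝ) < q := by exact_mod_cast hq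
  refine ⟨q, fun x => single (f x) 1, WithLp.toLp 2 fun _ => (√q)⁻¹, fun x => by simp, ?_,
    fun x y hxy hadj => ?_, fun x => ?_⟩
  · rw [EuclideanSpace.norm_eq, Real.sqrt_eq_one]
    simp [sum_const, hq'.ne']
  · simp [inner_single_left, hf x y hxy hadj]
  · simp [inner_single_right, hq'.ne']

theorem card_le_mul_of_mem_lovaszThetaValues [Fintype V] [Nonempty V] {𝕜 : Type*} [RCLike 𝕜]
    {ι : Type*} [Fintype ι] {Γ : V → EuclideanSpace 𝕜 ι} (hΓ : ∀ x, ‖Γ x‖ = 1)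
    (hΓorth : ∀ x y, G.Adj x y → ⟪Γ x, Γ y⟫_𝕜 = 0) {t : ℝ} (ht : t ∈ lovaszThetaValues G) :
    (Fintype.card V : ℝ) ≤ t * Fintype.card ι := by
  obtain ⟨d, u, c, hu, hc, huorth, hcu⟩ := ht
  have ht : 0 ≤ t := by
    obtain ⟨x⟩ := ‹Nonempty V›
    by_contra! ht
    linarith [hcu x, mul_nonpos_of_nonpos_of_nonneg ht.le (sq_nonneg ⟪c, u x⟫_ℝ)]
  calc (Fintype.card V : ℝ) = ∑ _x : V, 1 := by simp
    _ ≤ ∑ x, t * ⟪c, u x⟫_ℝ ^ 2 := sum_le_sum fun x _ => hcu x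
    _ = t * ∑ x, ⟪c, u x⟫_ℝ ^ 2 := (mul_sum ..).symm
    _ ≤ t * Fintype.card ι :=
      mul_le_mul_of_nonneg_left (sum_inner_sq_le_card_of_orthonormalRep hΓ hΓorth hu huorth hc) ht

end LovaszTheta

theorem lovaszTheta_eq_of_orthonormalRep_and_cliquePartition {V : Type*} [Fintype V]
    (G : SimpleGraph V) (q d : ℕ) (hq : 1 ≤ q) (hd : 1 ≤ d)
    (Γ : V → EuclideanSpace ℂ (Fin d))
    (hunit : ∀ x, ‖Γ x‖ = 1)
    (horth : ∀ x y, G.Adj x y → ⟪Γ x, Γ y⟫_ℂ = 0)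
    (P : Fin q → Finset V)
    (hclique : ∀ i, G.IsClique ((P i : Finset V) : Set V))
    (hsize : ∀ i, (P i).card = d)
    (hpart : ∀ v : V, ∃! i, v ∈ P i) :
    lovaszTheta G = q := by
  have hcard : Fintype.card V = q * d := by
    simp [Fintype.card_eq_sum_card_of_existsUnique_mem P hpart, hsize]
  have : Nonempty V := Fintype.card_pos_iff.mp (by rw [hcard]; positivity)
  choose f hf _ using hpart
  have hmem := natCast_mem_lovaszThetaValues_of_cliqueCover hq f
    fun x y hxy hadj hfxy => hadj (hclique (f y) (hfxy ▸ hf x) (hf y) hxy)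
  rw [lovaszTheta_eq_sInf]
  refine IsLeast.csInf_eq ⟨hmem, fun t ht => ?_⟩
  have hqd := card_le_mul_of_mem_lovaszThetaValues hunit horth ht
  rw [hcard, Fintype.card_fin, Nat.cast_mul] at hqd
  exact le_of_mul_le_mul_right hqd (Nat.cast_pos.mpr hd)
end

section
/- For n ≥ m ≥ 1, the universal channel U_{n,m} cannot be written as a convex combination of channels each of whose output support has size at most n−m; i.e., if U_{n,m} = Σ_i p_i N_i with p_i > 0, Σ p_i = 1, and each N_i a channel from m-subsets of [n] to [n], then some N_i assigns positive probability to more than n−m output symbols. -/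
open Finset

/-- The universal channel `U_{n,m}`: inputs are `m`-element subsets of `[n]`,
and the output is a uniformly random element of the input set. -/
noncomputable def universalChannel (n m : ℕ) :
    {s : Finset (Fin n) // s.card = m} → Fin n → ℝ :=
  fun x y => if y ∈ x.1 then 1 / (m : ℝ) else 0

/-! If the output support `Z` of a component `N i` had at most `n - m` elements, some `m`-set `x`
would avoid `Z`. But `p i • N i` is dominated by `U_{n,m}`, so `N i (· | x)` lives on `x`, and also
on `Z` by definition, hence vanishes, contradicting `∑_y N i (y | x) = 1`. -/

theorem Finset.card_sub_lt_card_of_forall_not_disjoint {α : Type*} [Fintype α] [DecidableEq α]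
    {m : ℕ} (hm : m ≤ Fintype.card α) (Z : Finset α)
    (hZ : ∀ s : Finset α, s.card = m → ¬Disjoint s Z) : Fintype.card α - m < Z.card := by
  by_contra! hcard
  have hcompl : m ≤ Zᶜ.card := by
    rw [card_compl]
    omega
  obtain ⟨s, hsZ, hs⟩ := exists_subset_card_eq hcompl
  exact hZ s hs (subset_compl_iff_disjoint_right.mp hsZ)

theorem mem_of_universalChannel_pos {n m : ℕ} {x : {s : Finset (Fin n) // s.card = m}} {y : Fin n}
    (h : 0 < universalChannel n m x y) : y ∈ x.1 := by
  by_contra hy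
  simp [universalChannel, hy] at h

theorem universalChannel_not_convexCombination_of_small_support_general
    (n m : ℕ) (hmn : m ≤ n)
    (K : ℕ) (p : Fin K → ℝ) (N : Fin K → {s : Finset (Fin n) // s.card = m} → Fin n → ℝ)
    (hp : ∀ i, 0 < p i) (hpsum : ∑ i, p i = 1)
    (hNnonneg : ∀ i x y, 0 ≤ N i x y) (hNstoch : ∀ i x, ∑ y : Fin n, N i x y = 1)
    (hdecomp : ∀ x y, universalChannel n m x y = ∑ i, p i * N i x y) :
    ∃ i : Fin K, n - m < (Finset.univ.filter fun y : Fin n => ∃ x, 0 < N i x y).card := by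
  obtain ⟨i⟩ : Nonempty (Fin K) := by
    by_contra! hK
    simp [Finset.univ_eq_empty] at hpsum
  refine ⟨i, ?_⟩
  have hsupp : ∀ x y, 0 < N i x y → y ∈ x.1 := by
    intro x y hy
    apply mem_of_universalChannel_pos
    rw [hdecomp]
    exact sum_pos' (fun j _ ↦ mul_nonneg (hp j).le (hNnonneg j x y)) ⟨i, mem_univ i, mul_pos (hp i) hy⟩
  have hmeets : ∀ s : Finset (Fin n), s.card = m →
      ¬Disjoint s (univ.filter fun y : Fin n => ∃ x, 0 < N i x y) := fun s hs hdisj ↦ by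
    obtain ⟨y, -, hy⟩ := exists_lt_of_sum_lt (s := univ) (f := 0) (g := N i ⟨s, hs⟩)
      (by simp [hNstoch])
    exact disjoint_left.mp hdisj (hsupp ⟨s, hs⟩ y hy) (mem_filter.mpr ⟨mem_univ y, ⟨s, hs⟩, hy⟩)
  simpa using card_sub_lt_card_of_forall_not_disjoint (by simpa using hmn) _ hmeets

open scoped Classical in
theorem universalChannel_not_convexCombination_of_small_support
    (n m : ℕ) (hm : 1 ≤ m) (hmn : m ≤ n)
    (K : ℕ) (p : Fin K → ℝ) (N : Fin K → {s : Finset (Fin n) // s.card = m} → Fin n → ℝ)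
    (hp : ∀ i, 0 < p i) (hpsum : ∑ i, p i = 1)
    (hNnonneg : ∀ i x y, 0 ≤ N i x y) (hNstoch : ∀ i x, ∑ y : Fin n, N i x y = 1)
    (hdecomp : ∀ x y, universalChannel n m x y = ∑ i, p i * N i x y) :
    ∃ i : Fin K, n - m < (Finset.univ.filter fun y : Fin n => ∃ x, 0 < N i x y).card :=
  universalChannel_not_convexCombination_of_small_support_general n m hmn K p N hp hpsum hNnonneg
    hNstoch hdecomp
end

section
/- Any channel N from X to Y exactly simulable by sending one of k messages with shared randomness is a convex combination of deterministic channels whose image has at most k elements; formally, if N = Σ_i p_i (R_i ∘ Q_i) with Q_i : X → [k] and R_i : [k] → Y channels and p a probability vector, then N lies in the convex hull of the set of zero/one stochastic matrices from X to Y of rank at most k (equivalently, deterministic maps X → Y with image size ≤ k). -/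
open Finset

lemma sum_pi_prod_aux {α β : Type*} [Fintype α] [DecidableEq α] [Fintype β] (f : α → β → ℝ) :
    ∑ h : α → β, ∏ a, f a (h a) = ∏ a, ∑ b, f a b := by
  rw [Finset.prod_univ_sum, Fintype.piFinset_univ]

lemma key_marginal {α β : Type*} [Fintype α] [DecidableEq α] [Fintype β] (A : α → β → ℝ)
    (hA : ∀ a, ∑ b, A a b = 1) (a0 : α) (G : β → ℝ) :
    ∑ h : α → β, (∏ a, A a (h a)) * G (h a0) = ∑ b, A a0 b * G b := by
  have h1 : ∀ h : α → β, (∏ a, A a (h a)) * G (h a0)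
      = ∏ a, (A a (h a) * if a = a0 then G (h a) else 1) := by
    intro h
    rw [Finset.prod_mul_distrib]
    congr 1
    simp
  simp_rw [h1]
  rw [sum_pi_prod_aux (fun a b => A a b * if a = a0 then G b else 1)]
  rw [Finset.prod_eq_single a0]
  · simp [mul_ite]
  · intro b _ hb
    simp [hb, hA b]
  · simp

theorem sharedRandomness_simulation_mem_convexHull_deterministic
    {X Y : Type*} [Fintype X] [Fintype Y] [DecidableEq Y]
    (k : ℕ) (I : ℕ) (p : Fin I → ℝ)
    (Q : Fin I → X → Fin k → ℝ) (R : Fin I → Fin k → Y → ℝ)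
    (hp : ∀ i, 0 ≤ p i) (hpsum : ∑ i, p i = 1)
    (hQnonneg : ∀ i x j, 0 ≤ Q i x j) (hQstoch : ∀ i x, ∑ j, Q i x j = 1)
    (hRnonneg : ∀ i j y, 0 ≤ R i j y) (hRstoch : ∀ i j, ∑ y, R i j y = 1)
    (N : X → Y → ℝ)
    (hN : ∀ x y, N x y = ∑ i, p i * ∑ j, R i j y * Q i x j) :
    N ∈ convexHull ℝ
      {M : X → Y → ℝ | ∃ f : X → Y, (Finset.univ.image f).card ≤ k ∧
        M = fun x y => if f x = y then (1 : ℝ) else 0} := by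
  classical
  set ι := Fin I × (X → Fin k) × (Fin k → Y) with hι
  set w : ι → ℝ := fun t => p t.1 * ((∏ x, Q t.1 x (t.2.1 x)) * (∏ j, R t.1 j (t.2.2 j))) with hw
  set z : ι → X → Y → ℝ := fun t x y => if t.2.2 (t.2.1 x) = y then 1 else 0 with hz
  have hw0 : ∀ t : ι, 0 ≤ w t := by
    intro t
    refine mul_nonneg (hp _) (mul_nonneg ?_ ?_) <;>
      exact Finset.prod_nonneg (fun _ _ => by first | exact hQnonneg _ _ _ | exact hRnonneg _ _ _)
  have hQsum1 : ∀ i, ∑ h : X → Fin k, ∏ x, Q i x (h x) = 1 := by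
    intro i
    rw [sum_pi_prod_aux]
    simp [hQstoch i]
  have hRsum1 : ∀ i, ∑ g : Fin k → Y, ∏ j, R i j (g j) = 1 := by
    intro i
    rw [sum_pi_prod_aux]
    simp [hRstoch i]
  have hwsum : ∑ t : ι, w t = 1 := by
    rw [Fintype.sum_prod_type]
    calc ∑ i, ∑ hg : (X → Fin k) × (Fin k → Y),
          p i * ((∏ x, Q i x (hg.1 x)) * (∏ j, R i j (hg.2 j)))
        = ∑ i, p i * ((∑ h : X → Fin k, ∏ x, Q i x (h x)) *
            (∑ g : Fin k → Y, ∏ j, R i j (g j))) := by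
          refine Finset.sum_congr rfl fun i _ => ?_
          rw [Fintype.sum_prod_type]
          simp only [Finset.sum_mul, Finset.mul_sum]
          rw [Finset.sum_comm]
      _ = 1 := by simp [hQsum1, hRsum1, hpsum]
  have hNeq : N = Finset.univ.centerMass w z := by
    rw [Finset.centerMass, hwsum, inv_one, one_smul]
    funext x y
    rw [hN]
    have hpt : (∑ t : ι, w t • z t) x y = ∑ t : ι, w t * z t x y := by
      simp [Finset.sum_apply]
    rw [hpt, Fintype.sum_prod_type]
    refine Finset.sum_congr rfl fun i _ => ?_
    rw [Fintype.sum_prod_type]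
    have step1 : ∀ h : X → Fin k,
        ∑ g : Fin k → Y, w (i, h, g) * z (i, h, g) x y
        = p i * ((∏ x', Q i x' (h x')) * R i (h x) y) := by
      intro h
      have e1 : ∑ g : Fin k → Y, w (i, h, g) * z (i, h, g) x y
          = p i * ((∏ x', Q i x' (h x')) *
            (∑ g : Fin k → Y, (∏ j, R i j (g j)) * (if g (h x) = y then (1:ℝ) else 0))) := by
        rw [Finset.mul_sum, Finset.mul_sum]
        refine Finset.sum_congr rfl fun g _ => ?_
        simp only [hw, hz]
        ring
      rw [e1, key_marginal (R i) (hRstoch i) (h x) (fun y' => if y' = y then (1:ℝ) else 0)]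
      simp
    simp_rw [step1]
    have e2 : ∑ h : X → Fin k, p i * ((∏ x', Q i x' (h x')) * R i (h x) y)
        = p i * ∑ h : X → Fin k, (∏ x', Q i x' (h x')) * R i (h x) y := by
      rw [Finset.mul_sum]
    rw [e2, key_marginal (Q i) (hQstoch i) x (fun j => R i j y)]
    congr 1
    refine Finset.sum_congr rfl fun j _ => ?_
    ring
  rw [hNeq]
  apply Finset.centerMass_mem_convexHull _ (fun t _ => hw0 t) (by rw [hwsum]; norm_num)
  intro t _
  refine ⟨t.2.2 ∘ t.2.1, ?_, ?_⟩
  · calc (Finset.univ.image (t.2.2 ∘ t.2.1)).card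
        ≤ (Finset.univ.image t.2.2).card := by
          apply Finset.card_le_card
          intro y hy
          simp only [Finset.mem_image] at hy ⊢
          obtain ⟨x, _, hx⟩ := hy
          exact ⟨t.2.1 x, Finset.mem_univ _, hx⟩
      _ ≤ (Finset.univ : Finset (Fin k)).card := Finset.card_image_le
      _ = k := by simp
  · rfl
end
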